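/- arXiv:2007.11143 — 4 statements merged into one kernel-verified Lean document; each statement's English description precedes it below -/
import Mathlib

section
/- For all 0 < a < 1 and τ > max{3, 1/(1−a)} there exist constants c ≥ 0 and C ≥ 1 depending only on a and τ such that for every metric space Z and every choice of hyperbolic filling data with parameters a, τ, the following holds: for all vertices v, w and every branch point u for {v, w}, |h(u) − (v|w)_h| ≤ c, and moreover C⁻¹·(d(v,w) + a^{min{h(v), h(w)}}) ≤ a^{(v|w)_h} ≤ C·(d(v,w) + a^{min{h(v), h(w)}}), where (v|w)_h = (h(v) + h(w) − |vw|)/2 and |vw| is the graph distance. -/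
open Filter

/-- Hyperbolic filling data for a metric space `Z` with parameter `a`: a choice, for
each `n : ℤ`, of a maximal `a^n`-separated subset `S n` of `Z`. -/
structure HypFilling (Z : Type*) [MetricSpace Z] (a : ℝ) where
  S : ℤ → Set Z
  separated : ∀ n : ℤ, ∀ x ∈ S n, ∀ y ∈ S n, x ≠ y → a ^ n ≤ dist x y
  maximal : ∀ (n : ℤ) (z : Z), ∃ x ∈ S n, dist z x < a ^ n

namespace HypFilling

variable {Z : Type*} [MetricSpace Z] {a : ℝ}

/-- The vertex set of the hyperbolic filling. -/
def Vertex (F : HypFilling Z a) : Type _ := {p : Z × ℤ // p.1 ∈ F.S p.2}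

/-- The height of a vertex. -/
def height {F : HypFilling Z a} (v : F.Vertex) : ℤ := v.1.2

/-- The underlying point in `Z` of a vertex. -/
def pt {F : HypFilling Z a} (v : F.Vertex) : Z := v.1.1

/-- Adjacency in the hyperbolic filling graph with dilation parameter `τ`: distinct
vertices of heights differing by at most `1` whose associated dilated balls meet. -/
def Adj {F : HypFilling Z a} (τ : ℝ) (v w : F.Vertex) : Prop :=
  v ≠ w ∧ |height v - height w| ≤ 1 ∧
    ∃ z : Z, dist z (pt v) < τ * a ^ height v ∧ dist z (pt w) < τ * a ^ height w

/-- `f 0, f 1, …, f k` is a walk in the filling graph. -/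
def IsWalk {F : HypFilling Z a} (τ : ℝ) (k : ℕ) (f : ℕ → F.Vertex) : Prop :=
  ∀ i < k, Adj τ (f i) (f (i + 1))

/-- Two vertices are joined by a walk. -/
def Joined {F : HypFilling Z a} (τ : ℝ) (v w : F.Vertex) : Prop :=
  ∃ (k : ℕ) (f : ℕ → F.Vertex), f 0 = v ∧ f k = w ∧ IsWalk τ k f

/-- The graph distance: the minimal number of edges of a walk joining `v` to `w`. -/
noncomputable def graphDist {F : HypFilling Z a} (τ : ℝ) (v w : F.Vertex) : ℕ :=
  sInf {k : ℕ | ∃ f : ℕ → F.Vertex, f 0 = v ∧ f k = w ∧ IsWalk τ k f}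

/-- The Gromov product `(v|w)_h` formed with heights and graph distances. -/
noncomputable def gpH {F : HypFilling Z a} (τ : ℝ) (v w : F.Vertex) : ℝ :=
  ((height v : ℝ) + (height w : ℝ) - (graphDist τ v w : ℝ)) / 2

/-- An ascending vertical walk from `u` to `v`. -/
def VertWalkUp {F : HypFilling Z a} (τ : ℝ) (u v : F.Vertex) : Prop :=
  ∃ (k : ℕ) (f : ℕ → F.Vertex), f 0 = u ∧ f k = v ∧
    ∀ i < k, Adj τ (f i) (f (i + 1)) ∧ height (f (i + 1)) = height (f i) + 1

/-- A cone point for the pair `{v, w}`: a vertex joined to each of `v` and `w` by a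
vertical walk, of height at most `min (height v) (height w)`. -/
def ConePoint {F : HypFilling Z a} (τ : ℝ) (u v w : F.Vertex) : Prop :=
  VertWalkUp τ u v ∧ VertWalkUp τ u w ∧ height u ≤ min (height v) (height w)

/-- A branch point for the pair `{v, w}`: a cone point of maximal height. -/
def BranchPoint {F : HypFilling Z a} (τ : ℝ) (u v w : F.Vertex) : Prop :=
  ConePoint τ u v w ∧ ∀ u' : F.Vertex, ConePoint τ u' v w → height u' ≤ height u

end HypFilling

/- ### auxiliary lemmas -/
namespace HypFillingAux

open HypFilling

variable {Z : Type*} [MetricSpace Z] {a τ : ℝ}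

lemma adj_symm {F : HypFilling Z a} {v w : F.Vertex} (h : Adj τ v w) : Adj τ w v := by
  obtain ⟨h1, h2, z, hz1, hz2⟩ := h
  exact ⟨h1.symm, by rwa [abs_sub_comm], z, hz2, hz1⟩

lemma height_ne {F : HypFilling Z a} {v w : F.Vertex} (h : height v ≠ height w) : v ≠ w :=
  fun e => h (by rw [e])

noncomputable def step (F : HypFilling Z a) (n : ℤ) (u : F.Vertex) : F.Vertex :=
  ⟨(Classical.choose (F.maximal n (pt u)), n),
    (Classical.choose_spec (F.maximal n (pt u))).1⟩

lemma step_height (F : HypFilling Z a) (n : ℤ) (u : F.Vertex) : height (step F n u) = n := rfl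

lemma step_dist (F : HypFilling Z a) (n : ℤ) (u : F.Vertex) :
    dist (pt u) (pt (step F n u)) < a ^ n :=
  (Classical.choose_spec (F.maximal n (pt u))).2

noncomputable def descend (F : HypFilling Z a) (v : F.Vertex) : ℕ → F.Vertex
  | 0 => v
  | (i+1) => step F (height v - (i+1)) (descend F v i)

@[simp] lemma descend_zero (F : HypFilling Z a) (v : F.Vertex) : descend F v 0 = v := rfl

lemma descend_height (F : HypFilling Z a) (v : F.Vertex) (i : ℕ) :
    height (descend F v i) = height v - i := by
  induction i with
  | zero => simp
  | succ i ih => simp [descend, step_height]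

lemma descend_adj (ha0 : 0 < a) (hτ1 : 1 ≤ τ) (F : HypFilling Z a) (v : F.Vertex) (i : ℕ) :
    Adj τ (descend F v (i+1)) (descend F v i) := by
  have h1 : height (descend F v (i+1)) = height v - (i+1) := descend_height F v (i+1)
  have h2 : height (descend F v i) = height v - i := descend_height F v i
  refine ⟨height_ne ?_, ?_, pt (descend F v i), ?_, ?_⟩
  · rw [h1, h2]; push_cast; omega
  · rw [h1, h2]
    have : height v - ((i:ℤ)+1) - (height v - i) = -1 := by push_cast; ring
    push_cast
    rw [this]; norm_num
  · have := step_dist F (height v - (i+1)) (descend F v i)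
    calc dist (pt (descend F v i)) (pt (descend F v (i+1))) < a ^ (height v - ((i:ℕ)+1:ℕ)) := this
      _ ≤ τ * a ^ height (descend F v (i+1)) := by
          rw [h1]
          push_cast
          nlinarith [zpow_pos ha0 (height v - ((i:ℤ)+1))]
  · rw [dist_self]
    have := zpow_pos ha0 (height (descend F v i))
    nlinarith

lemma descend_dist (ha0 : 0 < a) (ha1 : a < 1) (F : HypFilling Z a) (v : F.Vertex) (i : ℕ) :
    dist (pt v) (pt (descend F v i)) < a ^ (height v - (i:ℤ)) / (1 - a) := by
  have h1a : 0 < 1 - a := by linarith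
  induction i with
  | zero =>
      simp only [descend_zero, Nat.cast_zero, sub_zero, dist_self]
      positivity
  | succ i ih =>
      have h2 : dist (pt (descend F v i)) (pt (descend F v (i+1))) < a ^ (height v - ((i:ℕ)+1:ℕ)) :=
        step_dist F (height v - (i+1)) (descend F v i)
      have key : a ^ (height v - (i:ℤ)) = a ^ (height v - ((i:ℤ)+1)) * a := by
        rw [← zpow_add_one₀ ha0.ne']
        congr 1; ring
      have e : ((i+1:ℕ):ℤ) = (i:ℤ) + 1 := by push_cast; ring
      calc dist (pt v) (pt (descend F v (i+1)))
          ≤ dist (pt v) (pt (descend F v i)) + dist (pt (descend F v i)) (pt (descend F v (i+1))) :=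
            dist_triangle _ _ _
        _ < a ^ (height v - (i:ℤ)) / (1 - a) + a ^ (height v - ((i:ℤ)+1)) := by
            push_cast at h2
            linarith
        _ = a ^ (height v - ((i+1:ℕ):ℤ)) / (1 - a) := by
            rw [key, e]
            field_simp
            ring

lemma vertWalkUp_descend (ha0 : 0 < a) (hτ1 : 1 ≤ τ) (F : HypFilling Z a) (v : F.Vertex) (i : ℕ) :
    VertWalkUp τ (descend F v i) v := by
  refine ⟨i, fun j => descend F v (i - j), by simp, by simp, ?_⟩
  intro j hj
  have e : i - j = (i - (j+1)) + 1 := by omega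
  constructor
  · show Adj τ (descend F v (i - j)) (descend F v (i - (j+1)))
    rw [e]
    exact descend_adj ha0 hτ1 F v (i - (j+1))
  · show height (descend F v (i - (j+1))) = height (descend F v (i - j)) + 1
    rw [descend_height, descend_height]
    omega



lemma isWalk_reverse {F : HypFilling Z a} {k : ℕ} {f : ℕ → F.Vertex} (hw : IsWalk τ k f) :
    IsWalk τ k (fun j => f (k - j)) := by
  intro j hj
  have e : k - j = (k - (j+1)) + 1 := by omega
  show Adj τ (f (k - j)) (f (k - (j+1)))
  rw [e]
  exact adj_symm (hw (k - (j+1)) (by omega))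

lemma isWalk_height_le {F : HypFilling Z a} {k : ℕ} {f : ℕ → F.Vertex} (hw : IsWalk τ k f) :
    ∀ i ≤ k, |height (f i) - height (f 0)| ≤ (i : ℤ) := by
  intro i
  induction i with
  | zero => simp
  | succ i ih =>
      intro hik
      have h1 := ih (by omega)
      have h2 : |height (f (i+1)) - height (f i)| ≤ 1 := by
        have := (hw i (by omega)).2.1
        rwa [abs_sub_comm]
      calc |height (f (i+1)) - height (f 0)|
          ≤ |height (f (i+1)) - height (f i)| + |height (f i) - height (f 0)| := abs_sub_le _ _ _
        _ ≤ 1 + i := add_le_add h2 h1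
        _ = ((i+1 : ℕ) : ℤ) := by push_cast; ring

lemma isWalk_height_lb {F : HypFilling Z a} {k : ℕ} {f : ℕ → F.Vertex} (hw : IsWalk τ k f)
    {i : ℕ} (hik : i ≤ k) :
    height (f 0) - i ≤ height (f i) ∧ height (f k) - ((k - i : ℕ) : ℤ) ≤ height (f i) := by
  constructor
  · have := abs_le.mp (isWalk_height_le hw i hik)
    linarith [this.1]
  · have hr := isWalk_height_le (isWalk_reverse hw) (k - i) (by omega)
    simp only [Nat.sub_zero] at hr
    have e : k - (k - i) = i := by omega
    rw [e] at hr
    have := abs_le.mp hr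
    linarith [this.1]

lemma adj_dist_le {F : HypFilling Z a} {v w : F.Vertex} (h : Adj τ v w) :
    dist (pt v) (pt w) ≤ τ * a ^ height v + τ * a ^ height w := by
  obtain ⟨-, -, z, hz1, hz2⟩ := h
  calc dist (pt v) (pt w) ≤ dist (pt v) z + dist z (pt w) := dist_triangle _ _ _
    _ ≤ τ * a ^ height v + τ * a ^ height w := by
        rw [dist_comm (pt v) z]; linarith

lemma isWalk_dist_le {F : HypFilling Z a} {k : ℕ} {f : ℕ → F.Vertex} (hw : IsWalk τ k f) :
    dist (pt (f 0)) (pt (f k)) ≤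
      ∑ i ∈ Finset.range k, (τ * a ^ height (f i) + τ * a ^ height (f (i+1))) := by
  induction k with
  | zero => simp
  | succ k ih =>
      have hw' : IsWalk τ k f := fun i hi => hw i (by omega)
      have h1 := ih hw'
      have h2 := adj_dist_le (hw k (by omega))
      rw [Finset.sum_range_succ]
      calc dist (pt (f 0)) (pt (f (k+1)))
          ≤ dist (pt (f 0)) (pt (f k)) + dist (pt (f k)) (pt (f (k+1))) := dist_triangle _ _ _
        _ ≤ _ := by linarith

lemma walk_append {F : HypFilling Z a} {k₁ k₂ : ℕ} {f g : ℕ → F.Vertex} (hf : IsWalk τ k₁ f)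
    (hg : IsWalk τ k₂ g) (hfg : f k₁ = g 0) :
    ∃ h : ℕ → F.Vertex, h 0 = f 0 ∧ h (k₁ + k₂) = g k₂ ∧ IsWalk τ (k₁ + k₂) h := by
  refine ⟨fun j => if j < k₁ then f j else g (j - k₁), ?_, ?_, ?_⟩
  · by_cases h : 0 < k₁
    · simp [h]
    · have : k₁ = 0 := by omega
      simp [this, ← hfg]
  · have : ¬ (k₁ + k₂ < k₁) := by omega
    simp [this]
  · intro i hi
    dsimp only
    by_cases h1 : i + 1 < k₁
    · have h2 : i < k₁ := by omega
      simp only [if_pos h1, if_pos h2]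
      exact hf i (by omega)
    · by_cases h2 : i < k₁
      · have h3 : i + 1 = k₁ := by omega
        have h4 : i + 1 - k₁ = 0 := by omega
        rw [if_pos h2, if_neg h1, h4, ← hfg, ← h3]
        exact hf i (by omega)
      · have h3 : i + 1 - k₁ = (i - k₁) + 1 := by omega
        simp only [if_neg h1, if_neg h2, h3]
        exact hg (i - k₁) (by omega)

lemma vertWalkUp_exists_walk {F : HypFilling Z a} {u v : F.Vertex} (h : VertWalkUp τ u v) :
    ∃ (k : ℕ) (f : ℕ → F.Vertex), f 0 = u ∧ f k = v ∧ IsWalk τ k f ∧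
      (k : ℤ) = height v - height u := by
  obtain ⟨k, f, h0, hk, hstep⟩ := h
  refine ⟨k, f, h0, hk, fun i hi => (hstep i hi).1, ?_⟩
  have key : ∀ i ≤ k, height (f i) = height (f 0) + i := by
    intro i
    induction i with
    | zero => simp
    | succ i ih =>
        intro hik
        rw [(hstep i (by omega)).2, ih (by omega)]
        push_cast; ring
  have := key k le_rfl
  rw [h0, hk] at this
  omega

lemma conePoint_exists_walk {F : HypFilling Z a} {u v w : F.Vertex} (h : ConePoint τ u v w) :
    ∃ (k : ℕ) (f : ℕ → F.Vertex), f 0 = v ∧ f k = w ∧ IsWalk τ k f ∧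
      (k : ℤ) = (height v - height u) + (height w - height u) := by
  obtain ⟨h1, h2, -⟩ := h
  obtain ⟨k₁, f, hf0, hfk, hfw, hk₁⟩ := vertWalkUp_exists_walk h1
  obtain ⟨k₂, g, hg0, hgk, hgw, hk₂⟩ := vertWalkUp_exists_walk h2
  have hrev : IsWalk τ k₁ (fun j => f (k₁ - j)) := isWalk_reverse hfw
  have hglue : (fun j => f (k₁ - j)) k₁ = g 0 := by simp [Nat.sub_self, hf0, hg0]
  obtain ⟨h', hh0, hhk, hhw⟩ := walk_append hrev hgw hglue
  refine ⟨k₁ + k₂, h', ?_, ?_, hhw, ?_⟩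
  · rw [hh0]; simpa using hfk
  · rw [hhk, hgk]
  · push_cast; omega


lemma geom_sum_le_aux (ha0 : 0 < a) (ha1 : a < 1) (n : ℕ) :
    ∑ i ∈ Finset.range n, a ^ i ≤ 1 / (1 - a) := by
  have h1 : 0 < 1 - a := by linarith
  rw [le_div_iff₀ h1]
  have h2 := geom_sum_mul a n
  nlinarith [pow_nonneg ha0.le n]

lemma sum_zpow_add (ha0 : 0 < a) (ha1 : a < 1) (E : ℤ) (N : ℕ) :
    ∑ j ∈ Finset.range N, a ^ (E + (j:ℤ)) ≤ a ^ E / (1 - a) := by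
  have h : ∀ j ∈ Finset.range N, a ^ (E + (j:ℤ)) = a ^ E * a ^ j := by
    intro j _
    rw [zpow_add₀ ha0.ne', zpow_natCast]
  rw [Finset.sum_congr rfl h, ← Finset.mul_sum]
  have h2 := geom_sum_le_aux ha0 ha1 N
  have h3 : (0:ℝ) ≤ a ^ E := (zpow_pos ha0 E).le
  calc a ^ E * ∑ i ∈ Finset.range N, a ^ i ≤ a ^ E * (1 / (1 - a)) :=
        mul_le_mul_of_nonneg_left h2 h3
    _ = a ^ E / (1 - a) := by ring

lemma sum_zpow_sub (ha0 : 0 < a) (ha1 : a < 1) (M : ℤ) (N : ℕ) :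
    ∑ i ∈ Finset.range N, a ^ (M - (i:ℤ)) ≤ a ^ (M - N + 1) / (1 - a) := by
  rcases Nat.eq_zero_or_pos N with h | h
  · subst h
    simp only [Finset.range_zero, Finset.sum_empty]
    have := zpow_pos ha0 (M - (0:ℕ) + 1)
    have h1 : 0 < 1 - a := by linarith
    positivity
  · have hre := Finset.sum_range_reflect (fun i => a ^ (M - (i:ℤ))) N
    rw [← hre]
    have h2 : ∀ j ∈ Finset.range N, a ^ (M - ((N - 1 - j : ℕ):ℤ)) = a ^ ((M - N + 1) + (j:ℤ)) := by
      intro j hj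
      have := Finset.mem_range.mp hj
      congr 1
      omega
    rw [Finset.sum_congr rfl h2]
    exact sum_zpow_add ha0 ha1 _ N

end HypFillingAux

set_option maxHeartbeats 2000000
open HypFilling HypFillingAux

/-- Theorem: the height of any branch point for `{v,w}` agrees with the Gromov product
`(v|w)_h` up to an additive constant `c(a,τ)`, and `a^{(v|w)_h}` is comparable to
`d(v,w) + a^{min(h(v),h(w))}` with constant `C(a,τ)`. -/
theorem statement16 (a τ : ℝ) (ha0 : 0 < a) (ha1 : a < 1)
    (hτ : max 3 (1 / (1 - a)) < τ) :
    ∃ c C : ℝ, 0 ≤ c ∧ 1 ≤ C ∧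
      ∀ (Z : Type) [MetricSpace Z] (F : HypFilling Z a),
        ∀ v w : F.Vertex,
          (∀ u : F.Vertex, HypFilling.BranchPoint τ u v w →
            |(HypFilling.height u : ℝ) - HypFilling.gpH τ v w| ≤ c) ∧
          C⁻¹ * (dist (HypFilling.pt v) (HypFilling.pt w) +
              a ^ min (HypFilling.height v) (HypFilling.height w)) ≤
            a ^ HypFilling.gpH τ v w ∧
          a ^ HypFilling.gpH τ v w ≤
            C * (dist (HypFilling.pt v) (HypFilling.pt w) +
              a ^ min (HypFilling.height v) (HypFilling.height w)) := by
  have hτ3 : (3:ℝ) < τ := lt_of_le_of_lt (le_max_left _ _) hτ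
  have hτa : 1 / (1 - a) < τ := lt_of_le_of_lt (le_max_right _ _) hτ
  have h1a : 0 < 1 - a := by linarith
  have hτ0 : 0 < τ := by linarith
  have hτ1 : 1 ≤ τ := by linarith
  have hεpos : 0 < τ - 1/(1-a) := by linarith
  obtain ⟨s, hs⟩ := exists_pow_lt_of_lt_one hεpos ha1
  set L := Real.log a with hLdef
  have hL : L < 0 := Real.log_neg ha0 ha1
  set C₁ : ℝ := 2*τ*(1+1/a)/(1-a) + 1 with hC₁def
  have hC₁pos : 0 < 2*τ*(1+1/a)/(1-a) := by positivity
  have hC₁1 : 1 ≤ C₁ := by rw [hC₁def]; linarith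
  set C : ℝ := C₁ + (1/a)^(s+2) with hCdef
  have hpow : (0:ℝ) < (1/a)^(s+2) := by positivity
  have hC1 : 1 ≤ C := by rw [hCdef]; linarith
  have hCpos : 0 < C := by linarith
  have hlogC₁ : 0 ≤ Real.log C₁ := Real.log_nonneg hC₁1
  have hnegL : 0 < -L := by linarith
  set c : ℝ := (s:ℝ) + 2 + Real.log C₁ / (-L) with hcdef
  have hc0 : 0 ≤ c := by
    have h1 : 0 ≤ Real.log C₁ / (-L) := div_nonneg hlogC₁ hnegL.le
    have h2 : (0:ℝ) ≤ (s:ℝ) := Nat.cast_nonneg s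
    rw [hcdef]; linarith
  refine ⟨c, C, hc0, hC1, ?_⟩
  intro Z _ F v w
  classical
  set m : ℤ := HypFilling.height v with hm
  set n : ℤ := HypFilling.height w with hn
  set x : Z := HypFilling.pt v with hx
  set y : Z := HypFilling.pt w with hy
  set D : ℝ := dist x y + a ^ (min m n) with hDdef
  have hdxy : (0:ℝ) ≤ dist x y := dist_nonneg
  have hzmin : 0 < a ^ (min m n) := zpow_pos ha0 _
  have hDd : dist x y ≤ D := by rw [hDdef]; linarith
  have hDpos : 0 < D := by rw [hDdef]; linarith
  -- choice of h₀
  set lb := Real.logb a D with hlbdef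
  set h₀ : ℤ := min ⌊lb⌋ (min m n) with hh₀def
  have hh₀le : (h₀:ℝ) ≤ lb := by
    have h1 : ((min ⌊lb⌋ (min m n) : ℤ):ℝ) ≤ ((⌊lb⌋:ℤ):ℝ) := by exact_mod_cast min_le_left _ _
    rw [hh₀def]
    exact h1.trans (Int.floor_le lb)
  have hh₀mn : h₀ ≤ min m n := min_le_right _ _
  have haD : D = a ^ lb := (Real.rpow_logb ha0 ha1.ne hDpos).symm
  have hDle : D ≤ a ^ (h₀:ℤ) := by
    rw [haD, ← Real.rpow_intCast a h₀]
    exact Real.rpow_le_rpow_of_exponent_ge ha0 ha1.le hh₀le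
  have hh₀ub : a ^ (h₀:ℤ) ≤ D / a := by
    rcases le_total (⌊lb⌋ : ℤ) (min m n) with hcase | hcase
    · have he : h₀ = ⌊lb⌋ := min_eq_left hcase
      have h1 : lb - 1 ≤ ((h₀:ℤ):ℝ) := by rw [he]; exact (Int.sub_one_lt_floor lb).le
      calc a ^ (h₀:ℤ) = a ^ ((h₀:ℤ):ℝ) := (Real.rpow_intCast a h₀).symm
        _ ≤ a ^ (lb - 1) := Real.rpow_le_rpow_of_exponent_ge ha0 ha1.le h1
        _ = D / a := by rw [Real.rpow_sub ha0, Real.rpow_one, ← haD]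
    · have he : h₀ = min m n := min_eq_right hcase
      have h1 : a ^ (h₀:ℤ) ≤ D := by rw [he, hDdef]; linarith
      have h2 : D ≤ D / a := by
        rw [le_div_iff₀ ha0]
        have := mul_le_mul_of_nonneg_left ha1.le hDpos.le
        linarith
      linarith
  -- cone point construction
  set h₂ : ℤ := h₀ - s - 1 with hh₂def
  have hh₀m : h₀ ≤ m := le_trans hh₀mn (min_le_left _ _)
  have hh₀n : h₀ ≤ n := le_trans hh₀mn (min_le_right _ _)
  set t₁ : ℕ := (m - h₂).toNat with ht₁def
  set t₂ : ℕ := (n - h₂).toNat with ht₂def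
  have ht₁' : (t₁:ℤ) = m - h₂ := Int.toNat_of_nonneg (by omega)
  have ht₂' : (t₂:ℤ) = n - h₂ := Int.toNat_of_nonneg (by omega)
  have ht₂pos : 1 ≤ t₂ := by omega
  set u' : F.Vertex := descend F v t₁ with hu'def
  have hu'h : HypFilling.height u' = h₂ := by
    rw [hu'def, descend_height, ← hm]; omega
  clear_value m n x y D lb h₀ h₂ t₁ t₂ u'
  have hconeu' : HypFilling.ConePoint τ u' v w := by
    refine ⟨by rw [hu'def]; exact vertWalkUp_descend ha0 hτ1 F v t₁, ?_, ?_⟩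
    · -- VertWalkUp τ u' w
      refine ⟨t₂, fun j => if j = 0 then u' else descend F w (t₂ - j), by simp, ?_, ?_⟩
      · have hne : ¬ (t₂ = 0) := by omega
        simp [hne]
      · intro j hj
        dsimp only
        by_cases hj0 : j = 0
        · subst hj0
          show HypFilling.Adj τ u' (descend F w (t₂ - 1)) ∧
            HypFilling.height (descend F w (t₂ - 1)) = HypFilling.height u' + 1
          have e1 : HypFilling.height (descend F w (t₂ - 1)) = h₂ + 1 := by
            rw [descend_height, ← hn]; omega
          have hd1 : dist x (HypFilling.pt u') < a ^ h₂ / (1-a) := by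
            have h := descend_dist ha0 ha1 F v t₁
            rw [← hm, ← hx] at h
            have e : m - (t₁:ℤ) = h₂ := by omega
            rwa [e, ← hu'def] at h
          have hd2 : dist y (HypFilling.pt (descend F w (t₂-1))) < a ^ (h₂+1) / (1-a) := by
            have h := descend_dist ha0 ha1 F w (t₂-1)
            rw [← hn, ← hy] at h
            have e : n - ((t₂-1:ℕ):ℤ) = h₂ + 1 := by omega
            rwa [e] at h
          have hsplit : a ^ (h₀:ℤ) = a ^ (h₂+1) * a ^ (s:ℕ) := by
            rw [← zpow_natCast a s, ← zpow_add₀ ha0.ne']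
            congr 1; omega
          have hp2 : (0:ℝ) < a ^ (h₂+1) := zpow_pos ha0 _
          have hp1 : (0:ℝ) < a ^ h₂ := zpow_pos ha0 _
          have hτ1a : 1 < τ * (1-a) := by rwa [div_lt_iff₀ h1a] at hτa
          constructor
          · refine ⟨height_ne ?_, ?_, x, ?_, ?_⟩
            · rw [hu'h, e1]; omega
            · rw [hu'h, e1]
              rw [show h₂ - (h₂+1) = -1 from by ring]
              norm_num
            · rw [hu'h]
              calc dist x (HypFilling.pt u') < a ^ h₂ / (1-a) := hd1
                _ ≤ τ * a ^ h₂ := by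
                    rw [div_le_iff₀ h1a]
                    linarith [mul_lt_mul_of_pos_left hτ1a hp1]
            · rw [e1]
              have hxy2 : dist x (HypFilling.pt (descend F w (t₂-1))) <
                  a ^ (h₂+1) * a ^ (s:ℕ) + a ^ (h₂+1) / (1-a) := by
                calc dist x (HypFilling.pt (descend F w (t₂-1)))
                    ≤ dist x y + dist y (HypFilling.pt (descend F w (t₂-1))) := dist_triangle _ _ _
                  _ < D + a ^ (h₂+1) / (1-a) := by linarith
                  _ ≤ a ^ (h₀:ℤ) + a ^ (h₂+1) / (1-a) := by linarith
                  _ = a ^ (h₂+1) * a ^ (s:ℕ) + a ^ (h₂+1) / (1-a) := by rw [hsplit]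
              have hfin : a ^ (h₂+1) * a ^ (s:ℕ) + a ^ (h₂+1) / (1-a) ≤ τ * a ^ (h₂+1) := by
                have h9 : a ^ (s:ℕ) + 1/(1-a) ≤ τ := by linarith [hs]
                calc a ^ (h₂+1) * a ^ (s:ℕ) + a ^ (h₂+1) / (1-a)
                    = a ^ (h₂+1) * (a ^ (s:ℕ) + 1/(1-a)) := by ring
                  _ ≤ a ^ (h₂+1) * τ := mul_le_mul_of_nonneg_left h9 hp2.le
                  _ = τ * a ^ (h₂+1) := by ring
              linarith
          · rw [hu'h, e1]
        · have hj1 : ¬ (j + 1 = 0) := by omega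
          simp only [if_neg hj0, if_neg hj1]
          have hjt : j < t₂ := hj
          have e : t₂ - j = (t₂ - (j+1)) + 1 := by omega
          constructor
          · rw [e]; exact descend_adj ha0 hτ1 F w (t₂ - (j+1))
          · rw [descend_height, descend_height]; omega
    · rw [hu'h]; omega
  -- graph distance facts
  obtain ⟨k₀, f₀, hf₀0, hf₀k, hf₀w, hk₀⟩ := conePoint_exists_walk hconeu'
  rw [hu'h, ← hm, ← hn] at hk₀
  have hne : {k : ℕ | ∃ f : ℕ → F.Vertex, f 0 = v ∧ f k = w ∧ HypFilling.IsWalk τ k f}.Nonempty :=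
    ⟨k₀, f₀, hf₀0, hf₀k, hf₀w⟩
  set gd : ℕ := HypFilling.graphDist τ v w with hgddef
  have hgdk₀ : gd ≤ k₀ := Nat.sInf_le ⟨f₀, hf₀0, hf₀k, hf₀w⟩
  have hgdmem : ∃ f : ℕ → F.Vertex, f 0 = v ∧ f gd = w ∧ HypFilling.IsWalk τ gd f :=
    Nat.sInf_mem hne
  obtain ⟨f, hf0, hfk, hfw⟩ := hgdmem
  set G : ℝ := HypFilling.gpH τ v w with hGsdef
  have hGdef : G = ((m:ℝ) + (n:ℝ) - (gd:ℝ)) / 2 := by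
    rw [hGsdef, hm, hn, hgddef]; rfl
  have hGpos : 0 < a ^ G := Real.rpow_pos_of_pos ha0 G
  clear_value gd G
  -- height bounds along the walk
  have hml : ∀ i ≤ gd, m - (i:ℤ) ≤ HypFilling.height (f i) ∧
      n - ((gd - i:ℕ):ℤ) ≤ HypFilling.height (f i) := by
    intro i hi
    have h := isWalk_height_lb hfw hi
    rwa [hf0, hfk, ← hm, ← hn] at h
  have hmn_abs : |n - m| ≤ (gd:ℤ) := by
    have h := isWalk_height_le hfw gd le_rfl
    rwa [hf0, hfk, ← hm, ← hn] at h
  have hmn1 : n - m ≤ (gd:ℤ) := (abs_le.mp hmn_abs).2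
  have hmn2 : m - n ≤ (gd:ℤ) := by have := (abs_le.mp hmn_abs).1; linarith
  set iS : ℕ := (m - n + gd).toNat / 2 with hiSdef
  have hiS1 : iS ≤ gd := by omega
  have hiS2 : 2 * (iS:ℤ) ≤ m - n + gd := by omega
  have hiS3 : m - n + (gd:ℤ) ≤ 2 * iS + 1 := by omega
  clear_value iS
  -- distance sum bound
  have hsum : dist x y ≤ ∑ i ∈ Finset.range gd,
      (τ * a ^ HypFilling.height (f i) + τ * a ^ HypFilling.height (f (i+1))) := by
    have h := isWalk_dist_le hfw
    rwa [hf0, hfk, ← hx, ← hy] at h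
  have hsplitsum := Finset.sum_range_add_sum_Ico
    (fun i => τ * a ^ HypFilling.height (f i) + τ * a ^ HypFilling.height (f (i+1))) hiS1
  have hS1 : ∑ i ∈ Finset.range iS,
      (τ * a ^ HypFilling.height (f i) + τ * a ^ HypFilling.height (f (i+1)))
      ≤ 2*τ * (a ^ (m - (iS:ℤ)) / (1-a)) := by
    have hterm : ∀ i ∈ Finset.range iS,
        τ * a ^ HypFilling.height (f i) + τ * a ^ HypFilling.height (f (i+1))
          ≤ 2*τ * a ^ ((m - 1) - (i:ℤ)) := by
      intro i hi
      have hi' := Finset.mem_range.mp hi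
      have hb1 : m - (i:ℤ) ≤ HypFilling.height (f i) := (hml i (by omega)).1
      have hb2 : m - ((i:ℤ)+1) ≤ HypFilling.height (f (i+1)) := by
        have h := (hml (i+1) (by omega)).1
        push_cast at h
        linarith
      have e1 : a ^ HypFilling.height (f i) ≤ a ^ ((m-1) - (i:ℤ)) :=
        zpow_le_zpow_right_of_le_one₀ ha0 ha1.le (by omega)
      have e2 : a ^ HypFilling.height (f (i+1)) ≤ a ^ ((m-1) - (i:ℤ)) :=
        zpow_le_zpow_right_of_le_one₀ ha0 ha1.le (by omega)
      have p1 := mul_le_mul_of_nonneg_left e1 hτ0.le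
      have p2 := mul_le_mul_of_nonneg_left e2 hτ0.le
      linarith
    calc ∑ i ∈ Finset.range iS,
        (τ * a ^ HypFilling.height (f i) + τ * a ^ HypFilling.height (f (i+1)))
        ≤ ∑ i ∈ Finset.range iS, 2*τ*a^((m-1)-(i:ℤ)) := Finset.sum_le_sum hterm
      _ = 2*τ * ∑ i ∈ Finset.range iS, a^((m-1)-(i:ℤ)) := by rw [Finset.mul_sum]
      _ ≤ 2*τ * (a ^ ((m-1) - iS + 1) / (1-a)) := by
          have h := sum_zpow_sub ha0 ha1 (m-1) iS
          have h2τ : (0:ℝ) ≤ 2*τ := by linarith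
          exact mul_le_mul_of_nonneg_left h h2τ
      _ = 2*τ * (a ^ (m - (iS:ℤ)) / (1-a)) := by
          rw [show (m-1) - (iS:ℤ) + 1 = m - iS from by ring]
  have hS2 : ∑ i ∈ Finset.Ico iS gd,
      (τ * a ^ HypFilling.height (f i) + τ * a ^ HypFilling.height (f (i+1)))
      ≤ 2*τ * (a ^ (n - gd + (iS:ℤ)) / (1-a)) := by
    have hterm : ∀ i ∈ Finset.Ico iS gd,
        τ * a ^ HypFilling.height (f i) + τ * a ^ HypFilling.height (f (i+1))
          ≤ 2*τ * a ^ (n - gd + (i:ℤ)) := by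
      intro i hi
      obtain ⟨hi1, hi2⟩ := Finset.mem_Ico.mp hi
      have hb1 : n - ((gd - i:ℕ):ℤ) ≤ HypFilling.height (f i) := (hml i (by omega)).2
      have hb2 : n - ((gd - (i+1):ℕ):ℤ) ≤ HypFilling.height (f (i+1)) := (hml (i+1) (by omega)).2
      have e1 : a ^ HypFilling.height (f i) ≤ a ^ (n - gd + (i:ℤ)) :=
        zpow_le_zpow_right_of_le_one₀ ha0 ha1.le (by omega)
      have e2 : a ^ HypFilling.height (f (i+1)) ≤ a ^ (n - gd + (i:ℤ)) :=
        zpow_le_zpow_right_of_le_one₀ ha0 ha1.le (by omega)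
      have p1 := mul_le_mul_of_nonneg_left e1 hτ0.le
      have p2 := mul_le_mul_of_nonneg_left e2 hτ0.le
      linarith
    calc ∑ i ∈ Finset.Ico iS gd,
        (τ * a ^ HypFilling.height (f i) + τ * a ^ HypFilling.height (f (i+1)))
        ≤ ∑ i ∈ Finset.Ico iS gd, 2*τ*a^(n - gd + (i:ℤ)) := Finset.sum_le_sum hterm
      _ = 2*τ * ∑ i ∈ Finset.Ico iS gd, a^(n - gd + (i:ℤ)) := by rw [Finset.mul_sum]
      _ ≤ 2*τ * (a ^ (n - gd + (iS:ℤ)) / (1-a)) := by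
          have hre : ∑ i ∈ Finset.Ico iS gd, a^(n - gd + (i:ℤ))
              = ∑ j ∈ Finset.range (gd - iS), a^((n - gd + (iS:ℤ)) + (j:ℤ)) := by
            rw [Finset.sum_Ico_eq_sum_range]
            refine Finset.sum_congr rfl ?_
            intro j _
            congr 1
            push_cast
            ring
          rw [hre]
          have h := sum_zpow_add ha0 ha1 (n - gd + (iS:ℤ)) (gd - iS)
          have h2τ : (0:ℝ) ≤ 2*τ := by linarith
          exact mul_le_mul_of_nonneg_left h h2τ
  -- rpow comparisons
  have hmax1 : a ^ (m - (iS:ℤ)) ≤ a ^ G := by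
    rw [← Real.rpow_intCast a (m - iS)]
    apply Real.rpow_le_rpow_of_exponent_ge ha0 ha1.le
    rw [hGdef]
    have h2 : 2 * ((iS:ℤ):ℝ) ≤ ((m:ℤ):ℝ) - n + gd := by exact_mod_cast hiS2
    push_cast at h2 ⊢
    linarith
  have hmax2 : a ^ (n - gd + (iS:ℤ)) ≤ a ^ G / a := by
    have h1 : a ^ (n - gd + (iS:ℤ)) ≤ a ^ (G - 1) := by
      rw [← Real.rpow_intCast a (n - gd + iS)]
      apply Real.rpow_le_rpow_of_exponent_ge ha0 ha1.le
      rw [hGdef]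
      have h2 : ((m:ℤ):ℝ) - n + gd ≤ 2 * iS + 1 := by exact_mod_cast hiS3
      push_cast at h2 ⊢
      linarith
    rwa [Real.rpow_sub ha0, Real.rpow_one] at h1
  have hmax3 : a ^ (min m n) ≤ a ^ G := by
    rw [← Real.rpow_intCast a (min m n)]
    apply Real.rpow_le_rpow_of_exponent_ge ha0 ha1.le
    rw [hGdef]
    rcases le_total m n with hc | hc
    · rw [min_eq_left hc]
      have h2 : ((n:ℤ):ℝ) - m ≤ gd := by exact_mod_cast hmn1
      push_cast at h2 ⊢
      linarith
    · rw [min_eq_right hc]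
      have h2 : ((m:ℤ):ℝ) - n ≤ gd := by exact_mod_cast hmn2
      push_cast at h2 ⊢
      linarith
  -- direction 1 : D ≤ C₁ * a ^ G
  have hdir1 : D ≤ C₁ * a ^ G := by
    have hstep : dist x y ≤ 2*τ * (a ^ G / (1-a)) + 2*τ * ((a ^ G / a) / (1-a)) := by
      have h1 : dist x y ≤ 2*τ * (a ^ (m - (iS:ℤ)) / (1-a)) + 2*τ * (a ^ (n - gd + (iS:ℤ)) / (1-a)) := by
        rw [← hsplitsum] at hsum
        linarith
      have h2 : 2*τ * (a ^ (m - (iS:ℤ)) / (1-a)) ≤ 2*τ * (a ^ G / (1-a)) := by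
        apply mul_le_mul_of_nonneg_left _ (by linarith : (0:ℝ) ≤ 2*τ)
        exact div_le_div_of_nonneg_right hmax1 h1a.le
      have h3 : 2*τ * (a ^ (n - gd + (iS:ℤ)) / (1-a)) ≤ 2*τ * ((a ^ G / a) / (1-a)) := by
        apply mul_le_mul_of_nonneg_left _ (by linarith : (0:ℝ) ≤ 2*τ)
        exact div_le_div_of_nonneg_right hmax2 h1a.le
      linarith
    have : D ≤ 2*τ * (a ^ G / (1-a)) + 2*τ * ((a ^ G / a) / (1-a)) + a ^ G := by
      rw [hDdef]; linarith [hmax3]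
    calc D ≤ 2*τ * (a ^ G / (1-a)) + 2*τ * ((a ^ G / a) / (1-a)) + a ^ G := this
      _ = C₁ * a ^ G := by rw [hC₁def]; field_simp
  -- direction 2 : a ^ G ≤ C * D   (via the cone point)
  have hgd2 : (gd:ℤ) ≤ (m - h₂) + (n - h₂) := by omega
  have hh₂G : ((h₂:ℤ):ℝ) ≤ G := by
    rw [hGdef]
    have h2 : ((gd:ℕ):ℝ) ≤ ((m:ℤ):ℝ) - h₂ + (n - h₂) := by exact_mod_cast hgd2
    push_cast at h2 ⊢
    linarith
  have hstep1 : a ^ G ≤ a ^ (h₂:ℤ) := by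
    rw [← Real.rpow_intCast a h₂]
    exact Real.rpow_le_rpow_of_exponent_ge ha0 ha1.le hh₂G
  have hsplit2 : a ^ (h₂:ℤ) = a ^ (h₀:ℤ) / a ^ (s+1 : ℕ) := by
    rw [← zpow_natCast a (s+1), ← zpow_sub₀ ha0.ne']
    congr 1
    push_cast
    omega
  have hmain : a ^ (h₂:ℤ) ≤ D * (1/a)^(s+2) := by
    rw [hsplit2]
    have h3 : (0:ℝ) < a ^ (s+1:ℕ) := by positivity
    have h4 : a ^ (h₀:ℤ) / a ^ (s+1:ℕ) ≤ (D/a) / a ^ (s+1:ℕ) :=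
      div_le_div_of_nonneg_right hh₀ub h3.le
    have h5 : (D/a) / a ^ (s+1:ℕ) = D * (1/a)^(s+2) := by
      rw [div_div, ← pow_succ' a (s+1), one_div, inv_pow, div_eq_mul_inv]
    linarith [h4, h5.le]
  have hdir2 : a ^ G ≤ C * D := by
    have h6 : (1/a)^(s+2) ≤ C := by rw [hCdef]; linarith
    calc a ^ G ≤ D * (1/a)^(s+2) := le_trans hstep1 hmain
      _ ≤ D * C := mul_le_mul_of_nonneg_left h6 hDpos.le
      _ = C * D := mul_comm _ _
  -- assemble
  refine ⟨?_, ?_, ?_⟩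
  · -- branch points
    intro u hu
    obtain ⟨hcone, hmaxu⟩ := hu
    obtain ⟨k₃, f₃, h₃0, h₃k, h₃w, hk₃⟩ := conePoint_exists_walk hcone
    rw [← hm, ← hn] at hk₃
    have hgd3 : gd ≤ k₃ := by
      rw [hgddef]
      exact Nat.sInf_le ⟨f₃, h₃0, h₃k, h₃w⟩
    have hHu : ((HypFilling.height u : ℤ):ℝ) ≤ G := by
      rw [hGdef]
      have h1 : (gd:ℤ) ≤ (m - HypFilling.height u) + (n - HypFilling.height u) := by omega
      have h2 : ((gd:ℕ):ℝ) ≤ ((m:ℤ):ℝ) - (HypFilling.height u:ℤ) + ((n:ℤ) - (HypFilling.height u:ℤ)) := by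
        exact_mod_cast h1
      push_cast at h2 ⊢
      linarith
    have h2' : h₂ ≤ HypFilling.height u := by
      have := hmaxu u' hconeu'
      omega
    -- G ≤ h₀ + 1 + log C₁ / (-L)
    have hDa : a ^ ((h₀:ℤ)+1) ≤ D := by
      have he : a ^ ((h₀:ℤ)+1) = a ^ (h₀:ℤ) * a := by rw [zpow_add_one₀ ha0.ne']
      rw [he]
      exact (le_div_iff₀ ha0).mp hh₀ub
    have hkey : a ^ ((h₀:ℤ)+1) ≤ C₁ * a ^ G := le_trans hDa hdir1
    have hlog : (((h₀:ℤ):ℝ)+1) * L ≤ Real.log C₁ + G * L := by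
      have hl := Real.log_le_log (zpow_pos ha0 ((h₀:ℤ)+1)) hkey
      rw [Real.log_zpow, Real.log_mul (by linarith : C₁ ≠ 0) hGpos.ne', Real.log_rpow ha0] at hl
      push_cast at hl
      linarith
    have hGle : G ≤ ((h₀:ℤ):ℝ) + 1 + Real.log C₁ / (-L) := by
      have h7 : (G - (((h₀:ℤ):ℝ)+1)) * (-L) ≤ Real.log C₁ := by
        have e : (G - (((h₀:ℤ):ℝ)+1)) * (-L) = (((h₀:ℤ):ℝ)+1) * L - G * L := by ring
        rw [e]
        linarith
      have h8 := (le_div_iff₀ hnegL).mpr h7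
      linarith
    rw [abs_le]
    have hh₂r : ((h₂:ℤ):ℝ) = ((h₀:ℤ):ℝ) - s - 1 := by rw [hh₂def]; push_cast; ring
    have hhu : ((h₂:ℤ):ℝ) ≤ ((HypFilling.height u:ℤ):ℝ) := by exact_mod_cast h2'
    constructor
    · rw [hcdef]
      linarith
    · linarith
  · rw [inv_mul_le_iff₀ hCpos]
    calc D ≤ C₁ * a ^ G := hdir1
      _ ≤ C * a ^ G := mul_le_mul_of_nonneg_right (by rw [hCdef]; linarith) hGpos.le
  · exact hdir2
end

section
/- For all 0 < a < 1 and τ > max{3, 1/(1−a)} there exists a constant c ≥ 0 depending only on a and τ such that for every metric space Z and every choice of hyperbolic filling data with parameters a, τ, and for all vertices u, v, w: (u|w)_h ≥ min{(u|v)_h, (v|w)_h} − c, where (v|w)_h = (h(v) + h(w) − |vw|)/2 and |vw| is the graph distance. -/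
open Filter

section Helpers

open HypFilling Finset

variable {a τ : ℝ} {Z : Type} [MetricSpace Z] {F : HypFilling Z a}

lemma HF.ne_of_height {v w : F.Vertex} (h : height v ≠ height w) : v ≠ w :=
  fun e => h (by rw [e])

lemma HF.adj_symm {v w : F.Vertex} (h : Adj τ v w) : Adj τ w v :=
  ⟨h.1.symm, by rw [abs_sub_comm]; exact h.2.1,
   let ⟨z, hz1, hz2⟩ := h.2.2; ⟨z, hz2, hz1⟩⟩

lemma HF.descent (ha0 : 0 < a) (hτ1 : 1 ≤ τ) (v : F.Vertex) :
    ∃ g : ℕ → F.Vertex, g 0 = v ∧ (∀ j : ℕ, height (g j) = height v - j) ∧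
      (∀ j : ℕ, dist (pt v) (pt (g j)) < a ^ (height v - (j : ℤ))) ∧
      (∀ j : ℕ, Adj τ (g j) (g (j + 1))) := by
  have key : ∀ n : ℤ, ∃ u : F.Vertex, height u = n ∧ dist (pt v) (pt u) < a ^ n := by
    intro n
    obtain ⟨x, hx, hd⟩ := F.maximal n (pt v)
    exact ⟨⟨(x, n), hx⟩, rfl, hd⟩
  choose nx hh hd using key
  have hgt : ∀ j : ℕ, height (if j = 0 then v else nx (height v - j)) = height v - j := by
    intro j
    by_cases h : j = 0
    · simp [h]
    · simp [h, hh]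
  have hdd : ∀ j : ℕ, dist (pt v) (pt (if j = 0 then v else nx (height v - j)))
      < a ^ (height v - (j : ℤ)) := by
    intro j
    by_cases h : j = 0
    · simp only [h, if_pos]
      simpa using zpow_pos ha0 _
    · simpa [h] using hd (height v - j)
  refine ⟨fun j => if j = 0 then v else nx (height v - j), rfl, hgt, hdd, ?_⟩
  intro j
  refine ⟨HF.ne_of_height ?_, ?_, pt v, ?_, ?_⟩
  · rw [hgt j, hgt (j + 1)]
    push_cast
    omega
  · rw [hgt j, hgt (j + 1)]
    have : height v - (j : ℤ) - (height v - ((j : ℕ) + 1 : ℕ)) = 1 := by push_cast; ring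
    rw [this]
    norm_num
  · rw [hgt j]
    calc dist (pt v) (pt (if j = 0 then v else nx (height v - j)))
        < a ^ (height v - (j : ℤ)) := hdd j
      _ ≤ τ * a ^ (height v - (j : ℤ)) := le_mul_of_one_le_left (zpow_pos ha0 _).le hτ1
  · rw [hgt (j + 1)]
    calc dist (pt v) (pt (if (j+1) = 0 then v else nx (height v - (j+1))))
        < a ^ (height v - ((j+1 : ℕ) : ℤ)) := hdd (j+1)
      _ ≤ τ * a ^ (height v - ((j+1 : ℕ) : ℤ)) := le_mul_of_one_le_left (zpow_pos ha0 _).le hτ1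

end Helpers
section Helpers2

open HypFilling Finset

variable {a τ : ℝ} {Z : Type} [MetricSpace Z] {F : HypFilling Z a}

lemma HF.walk_height {k : ℕ} {f : ℕ → F.Vertex} (hk : IsWalk τ k f) :
    ∀ i ≤ k, height (f 0) - i ≤ height (f i) := by
  intro i hi
  induction i with
  | zero => simp
  | succ n ih =>
    have h1 := abs_le.mp (hk n (by omega)).2.1
    have h2 := ih (by omega)
    push_cast
    omega

lemma HF.walk_rev {k : ℕ} {f : ℕ → F.Vertex} (hk : IsWalk τ k f) :
    IsWalk τ k (fun i => f (k - i)) := by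
  intro i hi
  have e : k - (i + 1) + 1 = k - i := by omega
  have h := hk (k - (i + 1)) (by omega)
  rw [e] at h
  exact HF.adj_symm h

lemma HF.geom (ha0 : 0 < a) (ha1 : a < 1) (n : ℕ) (e : ℤ) :
    ∑ j ∈ range n, a ^ (e + (j : ℤ)) ≤ a ^ e / (1 - a) := by
  have h1a : (0 : ℝ) < 1 - a := by linarith
  have heq : ∑ j ∈ range n, a ^ (e + (j : ℤ)) = a ^ e * ∑ j ∈ range n, a ^ j := by
    rw [mul_sum]
    exact sum_congr rfl fun j _ => by rw [zpow_add₀ (ne_of_gt ha0), zpow_natCast]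
  rw [heq]
  have h2 : ∑ j ∈ range n, a ^ j ≤ 1 / (1 - a) := by
    rw [geom_sum_eq (ne_of_lt ha1)]
    have h3 : (a ^ n - 1) / (a - 1) = (1 - a ^ n) / (1 - a) := by
      rw [← neg_div_neg_eq]
      ring_nf
    rw [h3]
    apply (div_le_div_iff_of_pos_right h1a).mpr
    have := pow_nonneg ha0.le n
    linarith
  calc a ^ e * ∑ j ∈ range n, a ^ j ≤ a ^ e * (1 / (1 - a)) :=
        mul_le_mul_of_nonneg_left h2 (zpow_nonneg ha0.le _)
    _ = a ^ e / (1 - a) := by ring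

end Helpers2
section Helpers3

open HypFilling Finset

variable {a τ : ℝ} {Z : Type} [MetricSpace Z] {F : HypFilling Z a}

lemma HF.split_sum (ha0 : 0 < a) (ha1 : a < 1) (k : ℕ) (p q T : ℤ)
    (h2T : 2 * T ≤ p + q + 1) (g : ℕ → ℝ)
    (hg : ∀ i < k, g i ≤ a ^ (p - (i : ℤ)) ∧ g i ≤ a ^ (q + (i : ℤ))) :
    ∑ i ∈ range k, g i ≤ 2 * (a ^ T / (1 - a)) := by
  have h1a : (0 : ℝ) < 1 - a := by linarith
  set I := (T - q).toNat with hI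
  have step1 : ∑ i ∈ range k, g i ≤
      ∑ i ∈ range k, (if i < I then a ^ (p - (i : ℤ)) else a ^ (q + (i : ℤ))) := by
    refine sum_le_sum fun i hi => ?_
    by_cases h : i < I
    · simpa [h] using (hg i (mem_range.mp hi)).1
    · simpa [h] using (hg i (mem_range.mp hi)).2
  rw [sum_ite] at step1
  have first : ∑ i ∈ (range k).filter (fun i => i < I), a ^ (p - (i : ℤ))
      ≤ a ^ T / (1 - a) := by
    have hsub : (range k).filter (fun i => i < I) ⊆ range I := by
      intro i hi
      simp only [mem_filter, mem_range] at hi ⊢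
      omega
    have h1 : ∑ i ∈ (range k).filter (fun i => i < I), a ^ (p - (i : ℤ))
        ≤ ∑ i ∈ range I, a ^ (p - (i : ℤ)) :=
      sum_le_sum_of_subset_of_nonneg hsub fun i _ _ => (zpow_pos ha0 _).le
    rcases Nat.eq_zero_or_pos I with hI0 | hI0
    · calc ∑ i ∈ (range k).filter (fun i => i < I), a ^ (p - (i : ℤ))
          ≤ ∑ i ∈ range I, a ^ (p - (i : ℤ)) := h1
        _ = 0 := by rw [hI0]; simp
        _ ≤ a ^ T / (1 - a) := by positivity
    · have h2 : ∑ i ∈ range I, a ^ (p - (i : ℤ)) =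
          ∑ j ∈ range I, a ^ ((p - I + 1) + (j : ℤ)) := by
        refine ((sum_range_reflect (fun i => a ^ (p - (i : ℤ))) I).symm).trans ?_
        refine sum_congr rfl fun j hj => ?_
        have hj' := mem_range.mp hj
        congr 1
        omega
      have h3 : T ≤ p - I + 1 := by omega
      calc ∑ i ∈ (range k).filter (fun i => i < I), a ^ (p - (i : ℤ))
          ≤ ∑ j ∈ range I, a ^ ((p - I + 1) + (j : ℤ)) := h2 ▸ h1
        _ ≤ a ^ (p - I + 1) / (1 - a) := HF.geom ha0 ha1 I _
        _ ≤ a ^ T / (1 - a) := by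
            apply (div_le_div_iff_of_pos_right h1a).mpr
            exact zpow_le_zpow_right_of_le_one₀ ha0 ha1.le h3
  have second : ∑ i ∈ (range k).filter (fun i => ¬ i < I), a ^ (q + (i : ℤ))
      ≤ a ^ T / (1 - a) := by
    have hsub : (range k).filter (fun i => ¬ i < I) ⊆ Ico I (I + k) := by
      intro i hi
      simp only [mem_filter, mem_range, mem_Ico] at hi ⊢
      omega
    have h1 : ∑ i ∈ (range k).filter (fun i => ¬ i < I), a ^ (q + (i : ℤ))
        ≤ ∑ i ∈ Ico I (I + k), a ^ (q + (i : ℤ)) :=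
      sum_le_sum_of_subset_of_nonneg hsub fun i _ _ => (zpow_pos ha0 _).le
    have h2 : ∑ i ∈ Ico I (I + k), a ^ (q + (i : ℤ)) =
        ∑ j ∈ range k, a ^ ((q + I) + (j : ℤ)) := by
      rw [sum_Ico_eq_sum_range]
      have : I + k - I = k := by omega
      rw [this]
      refine sum_congr rfl fun j hj => ?_
      congr 1
      push_cast
      ring
    have h3 : T ≤ q + I := by omega
    calc ∑ i ∈ (range k).filter (fun i => ¬ i < I), a ^ (q + (i : ℤ))
        ≤ ∑ j ∈ range k, a ^ ((q + I) + (j : ℤ)) := h2 ▸ h1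
      _ ≤ a ^ (q + (I : ℤ)) / (1 - a) := HF.geom ha0 ha1 k _
      _ ≤ a ^ T / (1 - a) := by
          apply (div_le_div_iff_of_pos_right h1a).mpr
          exact zpow_le_zpow_right_of_le_one₀ ha0 ha1.le h3
  calc ∑ i ∈ range k, g i ≤ _ := step1
    _ ≤ a ^ T / (1 - a) + a ^ T / (1 - a) := add_le_add first second
    _ = 2 * (a ^ T / (1 - a)) := by ring

end Helpers3
section Helpers4

open HypFilling Finset

variable {a τ : ℝ} {Z : Type} [MetricSpace Z] {F : HypFilling Z a}

lemma HF.adj_dist (ha0 : 0 < a) (ha1 : a < 1) (hτ0 : 0 < τ) {v w : F.Vertex}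
    (h : Adj τ v w) :
    dist (pt v) (pt w) ≤ 2 * τ * a ^ (min (height v) (height w)) := by
  obtain ⟨-, -, z, h1, h2⟩ := h
  have ht := dist_triangle (pt v) z (pt w)
  rw [dist_comm (pt v) z] at ht
  have e1 : a ^ (height v) ≤ a ^ (min (height v) (height w)) :=
    zpow_le_zpow_right_of_le_one₀ ha0 ha1.le (min_le_left _ _)
  have e2 : a ^ (height w) ≤ a ^ (min (height v) (height w)) :=
    zpow_le_zpow_right_of_le_one₀ ha0 ha1.le (min_le_right _ _)
  nlinarith [mul_le_mul_of_nonneg_left e1 hτ0.le, mul_le_mul_of_nonneg_left e2 hτ0.le]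

lemma HF.le_gpH (ha0 : 0 < a) (ha1 : a < 1) (hτ0 : 0 < τ) (v w : F.Vertex)
    (hne : {k : ℕ | ∃ f : ℕ → F.Vertex, f 0 = v ∧ f k = w ∧ IsWalk τ k f}.Nonempty) :
    dist (pt v) (pt w) + a ^ (min (height v) (height w)) ≤
      (1 + 4 * τ / ((1 - a) * a)) * a ^ (gpH τ v w) := by
  have h1a : (0 : ℝ) < 1 - a := by linarith
  obtain ⟨f, hf0, hfk, hwalk⟩ : ∃ f : ℕ → F.Vertex, f 0 = v ∧ f (graphDist τ v w) = w ∧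
      IsWalk τ (graphDist τ v w) f := Nat.sInf_mem hne
  set k := graphDist τ v w with hkdef
  clear_value k
  -- height lower bounds along the walk
  have hlow : ∀ i ≤ k, height v - i ≤ height (f i) := by
    have := HF.walk_height hwalk
    rw [hf0] at this
    exact this
  have hlow2 : ∀ i ≤ k, height w - ((k : ℤ) - i) ≤ height (f i) := by
    intro i hi
    have h := HF.walk_height (HF.walk_rev hwalk) (k - i) (by omega)
    simp only [Nat.sub_zero] at h
    rw [hfk] at h
    have e : k - (k - i) = i := by omega
    rw [e] at h
    have e2 : ((k - i : ℕ) : ℤ) = (k : ℤ) - i := by omega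
    rw [e2] at h
    exact h
  have hgpH : gpH τ v w = ((height v : ℝ) + height w - k) / 2 := by
    rw [gpH, hkdef]
  -- the Gromov product is at most the min height
  have hgm : gpH τ v w ≤ ((min (height v) (height w) : ℤ) : ℝ) := by
    have h1 := hlow k le_rfl
    have h2 := hlow2 0 (Nat.zero_le k)
    rw [hfk] at h1
    rw [hf0] at h2
    have hint : (height v + height w - 2 * min (height v) (height w) : ℤ) ≤ (k : ℤ) := by omega
    have hr : ((height v : ℝ) + height w - 2 * ((min (height v) (height w) : ℤ) : ℝ)) ≤ (k : ℝ) := by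
      exact_mod_cast hint
    rw [hgpH]
    linarith
  -- bound on the distance
  set T : ℤ := ⌊gpH τ v w⌋ with hT
  have hT1 : (T : ℝ) ≤ gpH τ v w := Int.floor_le _
  have hT2 : gpH τ v w - 1 < T := Int.sub_one_lt_floor _
  have h2T0 : 2 * T ≤ height v + height w - k := by
    have : (2 * T : ℝ) ≤ (height v : ℝ) + height w - k := by
      rw [hgpH] at hT1; push_cast; linarith
    exact_mod_cast this
  have h2T : 2 * T ≤ (height v - 1) + (height w - k) + 1 := by omega
  have hdist : dist (pt v) (pt w) ≤ 2 * τ * (2 * (a ^ T / (1 - a))) := by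
    calc dist (pt v) (pt w) = dist (pt (f 0)) (pt (f k)) := by rw [hf0, hfk]
      _ ≤ ∑ i ∈ range k, dist (pt (f i)) (pt (f (i + 1))) :=
          dist_le_range_sum_dist (fun i => pt (f i)) k
      _ ≤ ∑ i ∈ range k, 2 * τ * a ^ (min (height (f i)) (height (f (i + 1)))) := by
          refine sum_le_sum fun i hi => ?_
          exact HF.adj_dist ha0 ha1 hτ0 (hwalk i (mem_range.mp hi))
      _ = 2 * τ * ∑ i ∈ range k, a ^ (min (height (f i)) (height (f (i + 1)))) := by
          rw [mul_sum]
      _ ≤ 2 * τ * (2 * (a ^ T / (1 - a))) := by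
          refine mul_le_mul_of_nonneg_left ?_ (by positivity)
          refine HF.split_sum ha0 ha1 k (height v - 1) (height w - k) T h2T _ fun i hi => ?_
          constructor
          · refine zpow_le_zpow_right_of_le_one₀ ha0 ha1.le ?_
            have l1 := hlow i (le_of_lt hi)
            have l2 := hlow (i + 1) (by omega)
            have e : ((i + 1 : ℕ) : ℤ) = (i : ℤ) + 1 := by push_cast; ring
            rw [e] at l2
            omega
          · refine zpow_le_zpow_right_of_le_one₀ ha0 ha1.le ?_
            have l1 := hlow2 i (le_of_lt hi)
            have l2 := hlow2 (i + 1) (by omega)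
            have e : ((i + 1 : ℕ) : ℤ) = (i : ℤ) + 1 := by push_cast; ring
            rw [e] at l2
            omega
  -- convert to rpow of the Gromov product
  have hza : ∀ x y : ℝ, x ≤ y → (a : ℝ) ^ y ≤ (a : ℝ) ^ x := fun x y h =>
    Real.rpow_le_rpow_of_exponent_ge ha0 ha1.le h
  have hrT : (a : ℝ) ^ T = (a : ℝ) ^ ((T : ℤ) : ℝ) := (Real.rpow_intCast a T).symm
  have hrT2 : (a : ℝ) ^ ((T : ℤ) : ℝ) ≤ (a : ℝ) ^ (gpH τ v w - 1) := hza _ _ (by linarith)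
  have hsub : (a : ℝ) ^ (gpH τ v w - 1) = (a : ℝ) ^ (gpH τ v w) / a := by
    rw [Real.rpow_sub ha0, Real.rpow_one]
  have hdist2 : dist (pt v) (pt w) ≤ (4 * τ / ((1 - a) * a)) * (a : ℝ) ^ (gpH τ v w) := by
    have hTg : (a : ℝ) ^ T ≤ (a : ℝ) ^ (gpH τ v w) / a := by
      rw [hrT]; rw [hsub] at hrT2; exact hrT2
    calc dist (pt v) (pt w) ≤ 2 * τ * (2 * (a ^ T / (1 - a))) := hdist
      _ ≤ 2 * τ * (2 * (((a : ℝ) ^ (gpH τ v w) / a) / (1 - a))) := by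
          refine mul_le_mul_of_nonneg_left ?_ (by positivity)
          refine mul_le_mul_of_nonneg_left ?_ (by norm_num)
          exact (div_le_div_iff_of_pos_right h1a).mpr hTg
      _ = (4 * τ / ((1 - a) * a)) * (a : ℝ) ^ (gpH τ v w) := by
          field_simp
          ring
  have hm : (a : ℝ) ^ (min (height v) (height w)) ≤ (a : ℝ) ^ (gpH τ v w) := by
    rw [← Real.rpow_intCast a (min (height v) (height w))]
    exact hza _ _ hgm
  linarith

end Helpers4
section Helpers5

open HypFilling Finset

variable {a τ : ℝ} {Z : Type} [MetricSpace Z] {F : HypFilling Z a}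

lemma HF.choose_N (ha0 : 0 < a) (ha1 : a < 1) (v w : F.Vertex) :
    ∃ N : ℤ, N ≤ min (height v) (height w) ∧ dist (pt v) (pt w) ≤ a ^ N ∧
      a ^ N ≤ (dist (pt v) (pt w) + a ^ (min (height v) (height w))) / a := by
  set m := min (height v) (height w) with hm
  set d := dist (pt v) (pt w) with hd
  have hd0 : 0 ≤ d := dist_nonneg
  have hloga : Real.log a < 0 := Real.log_neg ha0 ha1
  rcases le_or_gt d (a ^ m) with hcase | hcase
  · refine ⟨m, le_refl _, hcase, ?_⟩
    rw [le_div_iff₀ ha0]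
    nlinarith [zpow_pos ha0 m]
  · have hd1 : 0 < d := lt_trans (zpow_pos ha0 m) hcase
    set β : ℝ := Real.log d / Real.log a with hβ
    have haβ : (a : ℝ) ^ β = d := by
      rw [Real.rpow_def_of_pos ha0]
      have e : Real.log a * β = Real.log d := by
        rw [hβ, mul_comm, div_mul_cancel₀ _ (ne_of_lt hloga)]
      rw [e, Real.exp_log hd1]
    refine ⟨⌊β⌋, ?_, ?_, ?_⟩
    · have hβm : β < m := by
        have hlog : (m : ℝ) * Real.log a < Real.log d := by
          have := Real.log_lt_log (zpow_pos ha0 m) hcase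
          rwa [Real.log_zpow] at this
        rw [hβ, div_lt_iff_of_neg hloga]
        exact hlog
      have : (⌊β⌋ : ℝ) < (m : ℝ) := lt_of_le_of_lt (Int.floor_le β) hβm
      exact_mod_cast this.le
    · have h1 : (a : ℝ) ^ ((⌊β⌋ : ℤ) : ℝ) ≥ (a : ℝ) ^ β :=
        Real.rpow_le_rpow_of_exponent_ge ha0 ha1.le (Int.floor_le β)
      rw [haβ] at h1
      rwa [Real.rpow_intCast] at h1
    · have h1 : (a : ℝ) ^ ((⌊β⌋ : ℤ) : ℝ) ≤ (a : ℝ) ^ (β - 1) :=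
        Real.rpow_le_rpow_of_exponent_ge ha0 ha1.le (le_of_lt (Int.sub_one_lt_floor β))
      rw [Real.rpow_intCast] at h1
      have h2 : (a : ℝ) ^ (β - 1) = d / a := by
        rw [Real.rpow_sub ha0, Real.rpow_one, haβ]
      rw [h2] at h1
      refine h1.trans ?_
      exact (div_le_div_iff_of_pos_right ha0).mpr (le_add_of_nonneg_right (zpow_pos ha0 m).le)

end Helpers5
section Helpers6

open HypFilling Finset

variable {a τ : ℝ} {Z : Type} [MetricSpace Z] {F : HypFilling Z a}

lemma HF.gpH_le (ha0 : 0 < a) (ha1 : a < 1) (hτ2 : 2 < τ) (v w : F.Vertex) :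
    {k : ℕ | ∃ f : ℕ → F.Vertex, f 0 = v ∧ f k = w ∧ IsWalk τ k f}.Nonempty ∧
      (a : ℝ) ^ (gpH τ v w) ≤
        (dist (pt v) (pt w) + a ^ (min (height v) (height w))) / a ^ 2 := by
  have hτ1 : 1 ≤ τ := by linarith
  obtain ⟨N, hN1, hN2, hN3⟩ := HF.choose_N ha0 ha1 v w
  obtain ⟨gv, hgv0, hgvh, hgvd, hgva⟩ := HF.descent ha0 hτ1 v
  obtain ⟨gw, hgw0, hgwh, hgwd, hgwa⟩ := HF.descent (τ := τ) ha0 hτ1 w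
  set J := (height v - N).toNat with hJdef
  set L := (height w - N + 1).toNat with hLdef
  have hJ : (J : ℤ) = height v - N := Int.toNat_of_nonneg (by omega)
  have hL : (L : ℤ) = height w - N + 1 := Int.toNat_of_nonneg (by omega)
  set k := J + 1 + L with hkdef
  set f : ℕ → F.Vertex := fun i => if i ≤ J then gv i else gw (k - i) with hfdef
  have hf0 : f 0 = v := by simp [hfdef, hgv0]
  have hfk : f k = w := by
    have h1 : ¬ k ≤ J := by omega
    simp [hfdef, h1, hgw0]
  have hhv : height (gv J) = N := by rw [hgvh, hJ]; ring
  have hhw : height (gw L) = N - 1 := by rw [hgwh, hL]; ring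
  have hwalk : IsWalk τ k f := by
    intro i hi
    rcases lt_trichotomy i J with h | h | h
    · have e1 : f i = gv i := by simp [hfdef, h.le]
      have e2 : f (i + 1) = gv (i + 1) := by
        have h2 : i + 1 ≤ J := h
        simp [hfdef, h2]
      rw [e1, e2]
      exact hgva i
    · have e1 : f i = gv J := by simp [hfdef, h]
      have e2 : f (i + 1) = gw L := by
        have h1 : ¬ i + 1 ≤ J := by omega
        have h2 : k - (i + 1) = L := by omega
        simp [hfdef, h1, h2]
      rw [e1, e2]
      refine ⟨HF.ne_of_height ?_, ?_, pt v, ?_, ?_⟩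
      · rw [hhv, hhw]; omega
      · rw [hhv, hhw]; norm_num
      · rw [hhv]
        calc dist (pt v) (pt (gv J)) < a ^ (height v - (J : ℤ)) := hgvd J
          _ = a ^ N := by rw [hJ]; congr 1; ring
          _ ≤ τ * a ^ N := le_mul_of_one_le_left (zpow_pos ha0 _).le hτ1
      · rw [hhw]
        have d1 : dist (pt w) (pt (gw L)) < a ^ (N - 1) := by
          have := hgwd L
          rwa [hL, show height w - (height w - N + 1) = N - 1 by ring] at this
        have d2 : dist (pt v) (pt (gw L)) ≤ dist (pt v) (pt w) + dist (pt w) (pt (gw L)) :=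
          dist_triangle _ _ _
        have d3 : (a : ℝ) ^ N ≤ a ^ (N - 1) :=
          zpow_le_zpow_right_of_le_one₀ ha0 ha1.le (by omega)
        have : dist (pt v) (pt (gw L)) < 2 * a ^ (N - 1) := by
          calc dist (pt v) (pt (gw L)) ≤ dist (pt v) (pt w) + dist (pt w) (pt (gw L)) := d2
            _ < a ^ N + a ^ (N - 1) := by
                have := hN2; linarith
            _ ≤ 2 * a ^ (N - 1) := by linarith
        calc dist (pt v) (pt (gw L)) < 2 * a ^ (N - 1) := this
          _ ≤ τ * a ^ (N - 1) := by
              have := zpow_pos ha0 (N - 1)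
              nlinarith
    · have e1 : f i = gw (k - i) := by
        have h1 : ¬ i ≤ J := by omega
        simp [hfdef, h1]
      have e2 : f (i + 1) = gw (k - i - 1) := by
        have h1 : ¬ i + 1 ≤ J := by omega
        have h2 : k - (i + 1) = k - i - 1 := by omega
        simp [hfdef, h1, h2]
      rw [e1, e2]
      have e3 : k - i - 1 + 1 = k - i := by omega
      have := hgwa (k - i - 1)
      rw [e3] at this
      exact HF.adj_symm this
  have hmem : k ∈ {k : ℕ | ∃ f : ℕ → F.Vertex, f 0 = v ∧ f k = w ∧ IsWalk τ k f} :=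
    ⟨f, hf0, hfk, hwalk⟩
  refine ⟨⟨k, hmem⟩, ?_⟩
  have hgd : graphDist τ v w ≤ k := Nat.sInf_le hmem
  have hkr : (k : ℝ) = (height v : ℝ) + height w - 2 * N + 2 := by
    have : (k : ℤ) = height v + height w - 2 * N + 2 := by omega
    exact_mod_cast this
  have hgp : ((N : ℤ) : ℝ) - 1 ≤ gpH τ v w := by
    rw [gpH]
    have : ((graphDist τ v w : ℕ) : ℝ) ≤ (k : ℝ) := by exact_mod_cast hgd
    rw [hkr] at this
    linarith
  have h1 : (a : ℝ) ^ (gpH τ v w) ≤ (a : ℝ) ^ (((N : ℤ) : ℝ) - 1) :=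
    Real.rpow_le_rpow_of_exponent_ge ha0 ha1.le hgp
  have h2 : (a : ℝ) ^ (((N : ℤ) : ℝ) - 1) = a ^ N / a := by
    rw [Real.rpow_sub ha0, Real.rpow_one, Real.rpow_intCast]
  have h3 : (a : ℝ) ^ N / a ≤
      ((dist (pt v) (pt w) + a ^ (min (height v) (height w))) / a) / a :=
    (div_le_div_iff_of_pos_right ha0).mpr hN3
  calc (a : ℝ) ^ (gpH τ v w) ≤ a ^ N / a := h2 ▸ h1
    _ ≤ ((dist (pt v) (pt w) + a ^ (min (height v) (height w))) / a) / a := h3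
    _ = (dist (pt v) (pt w) + a ^ (min (height v) (height w))) / a ^ 2 := by
        rw [div_div, sq]

end Helpers6
open HypFilling in
/-- Theorem: the Gromov products `(·|·)_h` formed with heights and graph distances
satisfy the hyperbolicity inequality with a constant depending only on `a` and `τ`. -/
theorem statement17 (a τ : ℝ) (ha0 : 0 < a) (ha1 : a < 1)
    (hτ : max 3 (1 / (1 - a)) < τ) :
    ∃ c : ℝ, 0 ≤ c ∧
      ∀ (Z : Type) [MetricSpace Z] (F : HypFilling Z a),
        ∀ u v w : F.Vertex,
          HypFilling.gpH τ u w ≥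
            min (HypFilling.gpH τ u v) (HypFilling.gpH τ v w) - c := by
  have h3τ : (3 : ℝ) < τ := lt_of_le_of_lt (le_max_left _ _) hτ
  have hτ2 : (2 : ℝ) < τ := by linarith
  have hτ0 : (0 : ℝ) < τ := by linarith
  have h1a : (0 : ℝ) < 1 - a := by linarith
  have hloga : Real.log a < 0 := Real.log_neg ha0 ha1
  set K := 1 + 4 * τ / ((1 - a) * a) with hK
  clear_value K
  have hKpos : 0 < (1 - a) * a := by positivity
  have hK1 : 1 ≤ K := by
    have : 0 ≤ 4 * τ / ((1 - a) * a) := by positivity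
    linarith
  have hK0 : 0 < K := by linarith
  set C := 2 * K / a ^ 2 with hC
  clear_value C
  have hC0 : 0 < C := by rw [hC]; positivity
  have hC1 : 1 ≤ C := by
    rw [hC, le_div_iff₀ (by positivity)]
    nlinarith
  set c := Real.log C / (-Real.log a) with hc
  clear_value c
  have hc0 : 0 ≤ c := by
    rw [hc]
    exact div_nonneg (Real.log_nonneg hC1) (by linarith)
  refine ⟨c, hc0, ?_⟩
  intro Z _ F u v w
  have hac : (a : ℝ) ^ (-c) = C := by
    rw [Real.rpow_def_of_pos ha0]
    have hneg : -c = Real.log C / Real.log a := by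
      rw [hc, div_neg, neg_neg]
    rw [hneg, mul_comm, div_mul_cancel₀ _ (ne_of_lt hloga), Real.exp_log hC0]
  obtain ⟨hne_uv, hup_uv⟩ := HF.gpH_le ha0 ha1 hτ2 u v
  obtain ⟨hne_vw, hup_vw⟩ := HF.gpH_le ha0 ha1 hτ2 v w
  obtain ⟨hne_uw, hup_uw⟩ := HF.gpH_le ha0 ha1 hτ2 u w
  have hlow_uv := HF.le_gpH ha0 ha1 hτ0 u v hne_uv
  have hlow_vw := HF.le_gpH ha0 ha1 hτ0 v w hne_vw
  rw [← hK] at hlow_uv hlow_vw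
  -- triangle inequality for the auxiliary quasi-metric
  have htri : dist (pt u) (pt w) + a ^ (min (height u) (height w)) ≤
      (dist (pt u) (pt v) + a ^ (min (height u) (height v))) +
      (dist (pt v) (pt w) + a ^ (min (height v) (height w))) := by
    have hd := dist_triangle (pt u) (pt v) (pt w)
    rcases le_total (min (height u) (height v)) (min (height v) (height w)) with h | h
    · have h1 : min (height u) (height v) ≤ min (height u) (height w) := by omega
      have h2 := zpow_le_zpow_right_of_le_one₀ ha0 ha1.le h1
      have h3 := zpow_pos ha0 (min (height v) (height w))
      linarith
    · have h1 : min (height v) (height w) ≤ min (height u) (height w) := by omega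
      have h2 := zpow_le_zpow_right_of_le_one₀ ha0 ha1.le h1
      have h3 := zpow_pos ha0 (min (height u) (height v))
      linarith
  set x := gpH τ u v with hx
  set y := gpH τ v w with hy
  have hxm : (a : ℝ) ^ x ≤ (a : ℝ) ^ (min x y) :=
    Real.rpow_le_rpow_of_exponent_ge ha0 ha1.le (min_le_left _ _)
  have hym : (a : ℝ) ^ y ≤ (a : ℝ) ^ (min x y) :=
    Real.rpow_le_rpow_of_exponent_ge ha0 ha1.le (min_le_right _ _)
  have key : (a : ℝ) ^ (gpH τ u w) ≤ (a : ℝ) ^ (min x y - c) := by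
    have e : (a : ℝ) ^ (min x y - c) = C * (a : ℝ) ^ (min x y) := by
      rw [sub_eq_add_neg, Real.rpow_add ha0, hac]
      ring
    rw [e]
    have ha2 : (0 : ℝ) < a ^ 2 := by positivity
    calc (a : ℝ) ^ (gpH τ u w)
        ≤ (dist (pt u) (pt w) + a ^ (min (height u) (height w))) / a ^ 2 := hup_uw
      _ ≤ ((dist (pt u) (pt v) + a ^ (min (height u) (height v))) +
            (dist (pt v) (pt w) + a ^ (min (height v) (height w)))) / a ^ 2 :=
          (div_le_div_iff_of_pos_right ha2).mpr htri
      _ ≤ (K * (a : ℝ) ^ x + K * (a : ℝ) ^ y) / a ^ 2 :=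
          (div_le_div_iff_of_pos_right ha2).mpr (add_le_add hlow_uv hlow_vw)
      _ ≤ (K * (a : ℝ) ^ (min x y) + K * (a : ℝ) ^ (min x y)) / a ^ 2 :=
          (div_le_div_iff_of_pos_right ha2).mpr
            (add_le_add (mul_le_mul_of_nonneg_left hxm hK0.le)
              (mul_le_mul_of_nonneg_left hym hK0.le))
      _ = C * (a : ℝ) ^ (min x y) := by rw [hC]; ring
  have := (Real.rpow_le_rpow_left_iff_of_base_lt_one ha0 ha1).mp key
  exact this
end

section
/- Fix hyperbolic filling data for a metric space Z with parameters a, τ, and let Z̄ denote the metric completion of Z with extended metric d̄. For every z ∈ Z̄ there exists a sequence of vertices (v_n)_{n ∈ ℤ} with h(v_n) = n, v_n ∼ v_{n+1} for all n, and d̄(z, v_n) < (τ/3)·a^n for all n ∈ ℤ (a vertical geodesic line anchored at z). Moreover, if m ∈ ℤ and z ∈ S_m (viewing Z ⊆ Z̄), then the sequence can be chosen so that v_m = (z, m). -/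
/-!
Fix `z ∈ Z̄` and, at every height `n`, take a vertex `v n` of `S n` within `(τ/3)·aⁿ` of `z`:
since `τ/3 > 1`, a point of `Z` within `(τ/3 - 1)·aⁿ` of `z` has such a vertex by maximality of
`S n`. Consecutive vertices are adjacent because the balls `B(v n)` and `B(v (n+1))` both contain
a neighbourhood of `z` in `Z̄`, hence a common point of the dense subset `Z`. The choice at any
single height is free, so the line can be made to pass through `(z₀, m)`, at distance `0` from `z₀`.
-/

open Filter

open UniformSpace

lemma UniformSpace.Completion.exists_dist_lt_and_dist_lt {Z : Type*} [MetricSpace Z]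
    {z : Completion Z} {x y : Z} {r s : ℝ} (hx : dist z x < r) (hy : dist z y < s) :
    ∃ p : Z, dist p x < r ∧ dist p y < s := by
  have hopen : IsOpen {w : Completion Z | dist w x < r ∧ dist w y < s} :=
    (isOpen_lt (continuous_id.dist continuous_const) continuous_const).inter
      (isOpen_lt (continuous_id.dist continuous_const) continuous_const)
  obtain ⟨p, hp⟩ := Completion.denseRange_coe.exists_mem_open hopen ⟨z, hx, hy⟩
  exact ⟨p, by simpa only [Set.mem_ofPred_eq, Completion.dist_eq] using hp⟩

namespace HypFilling

variable {Z : Type*} [MetricSpace Z] {a : ℝ} {F : HypFilling Z a}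

lemma adj_of_dist_completion_lt {τ : ℝ} {v w : F.Vertex} (hvw : height w = height v + 1)
    (z : Completion Z) (hv : dist z ((pt v : Z) : Completion Z) < τ * a ^ height v)
    (hw : dist z ((pt w : Z) : Completion Z) < τ * a ^ height w) : Adj τ v w := by
  obtain ⟨p, hpv, hpw⟩ := Completion.exists_dist_lt_and_dist_lt hv hw
  exact ⟨fun h => by rw [h] at hvw; omega, by rw [hvw]; simp, p, hpv, hpw⟩

lemma exists_vertex_dist_completion_lt (ha : 0 < a) {c : ℝ} (hc : 1 < c)
    (z : Completion Z) (n : ℤ) :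
    ∃ v : F.Vertex, height v = n ∧ dist z ((pt v : Z) : Completion Z) < c * a ^ n := by
  have hε : 0 < (c - 1) * a ^ n := mul_pos (by linarith) (zpow_pos ha n)
  obtain ⟨y, hy⟩ := Completion.denseRange_coe.exists_dist_lt z hε
  obtain ⟨x, hx, hxy⟩ := F.maximal n y
  refine ⟨⟨(x, n), hx⟩, rfl, ?_⟩
  calc dist z (x : Completion Z)
      ≤ dist z (y : Completion Z) + dist (y : Completion Z) (x : Completion Z) :=
        dist_triangle _ _ _
    _ < (c - 1) * a ^ n + a ^ n := by rw [Completion.dist_eq]; exact add_lt_add hy hxy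
    _ = c * a ^ n := by ring

lemma adj_succ_of_dist_completion_lt (ha : 0 < a) {τ : ℝ} (hτ : 0 < τ) {v : ℤ → F.Vertex}
    (hheight : ∀ n, height (v n) = n) (z : Completion Z)
    (hdist : ∀ n, dist z ((pt (v n) : Z) : Completion Z) < (τ / 3) * a ^ n) (n : ℤ) :
    Adj τ (v n) (v (n + 1)) := by
  have hclose : ∀ k, dist z ((pt (v k) : Z) : Completion Z) < τ * a ^ height (v k) := fun k =>
    (hdist k).trans_le <| by
      rw [hheight k]; exact mul_le_mul_of_nonneg_right (by linarith) (zpow_pos ha k).le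
  exact adj_of_dist_completion_lt (by rw [hheight, hheight]) z (hclose n) (hclose (n + 1))

lemma exists_vertical_line_through (ha : 0 < a) {τ : ℝ} (hτ : 3 < τ) (z : Completion Z)
    (u : F.Vertex) (hzu : dist z ((pt u : Z) : Completion Z) < (τ / 3) * a ^ height u) :
    ∃ v : ℤ → F.Vertex, (∀ n, height (v n) = n) ∧ (∀ n, Adj τ (v n) (v (n + 1))) ∧
      (∀ n, dist z ((pt (v n) : Z) : Completion Z) < (τ / 3) * a ^ n) ∧ v (height u) = u := by
  choose w hheight hdist using exists_vertex_dist_completion_lt (F := F) ha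
    (show 1 < τ / 3 by linarith) z
  let v := Function.update w (height u) u
  have hv : ∀ n, v n = if n = height u then u else w n := fun n => Function.update_apply ..
  have hheight' : ∀ n, height (v n) = n := by
    intro n
    rw [hv]
    split_ifs with hn
    exacts [hn.symm, hheight n]
  have hdist' : ∀ n, dist z ((pt (v n) : Z) : Completion Z) < (τ / 3) * a ^ n := by
    intro n
    rw [hv]
    split_ifs with hn
    exacts [hn ▸ hzu, hdist n]
  exact ⟨v, hheight', adj_succ_of_dist_completion_lt ha (by linarith) hheight' z hdist',
    hdist', Function.update_self ..⟩

end HypFilling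

open UniformSpace in
theorem statement18_general {Z : Type*} [MetricSpace Z] (a τ : ℝ)
    (ha0 : 0 < a) (hτ : max 3 (1 / (1 - a)) < τ)
    (F : HypFilling Z a) :
    (∀ z : Completion Z, ∃ v : ℤ → F.Vertex,
      (∀ n : ℤ, HypFilling.height (v n) = n) ∧
      (∀ n : ℤ, HypFilling.Adj τ (v n) (v (n + 1))) ∧
      (∀ n : ℤ, dist z ((HypFilling.pt (v n) : Z) : Completion Z) < (τ / 3) * a ^ n)) ∧
    (∀ (m : ℤ) (z₀ : Z) (hz : z₀ ∈ F.S m), ∃ v : ℤ → F.Vertex,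
      (∀ n : ℤ, HypFilling.height (v n) = n) ∧
      (∀ n : ℤ, HypFilling.Adj τ (v n) (v (n + 1))) ∧
      (∀ n : ℤ, dist ((z₀ : Z) : Completion Z) ((HypFilling.pt (v n) : Z) : Completion Z) <
        (τ / 3) * a ^ n) ∧
      v m = ⟨(z₀, m), hz⟩) := by
  have hτ3 : 3 < τ := (le_max_left _ _).trans_lt hτ
  refine ⟨fun z => ?_, fun m z₀ hz => ?_⟩
  · obtain ⟨u, hu, hzu⟩ := HypFilling.exists_vertex_dist_completion_lt (F := F) ha0
      (show 1 < τ / 3 by linarith) z 0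
    obtain ⟨v, hheight, hadj, hdist, -⟩ :=
      HypFilling.exists_vertical_line_through ha0 hτ3 z u (hu ▸ hzu)
    exact ⟨v, hheight, hadj, hdist⟩
  · have hz₀ : dist (z₀ : Completion Z) (z₀ : Completion Z) < (τ / 3) * a ^ m := by
      rw [dist_self]; exact mul_pos (by linarith) (zpow_pos ha0 m)
    exact HypFilling.exists_vertical_line_through ha0 hτ3 _ ⟨(z₀, m), hz⟩ hz₀

open UniformSpace in
/-- Theorem: every point of the completion `Z̄` is the anchor of a vertical geodesic
line in the hyperbolic filling; moreover the line can be chosen through any given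
vertex lying over the anchor point. -/
theorem statement18 {Z : Type*} [MetricSpace Z] (a τ : ℝ)
    (ha0 : 0 < a) (ha1 : a < 1) (hτ : max 3 (1 / (1 - a)) < τ)
    (F : HypFilling Z a) :
    (∀ z : Completion Z, ∃ v : ℤ → F.Vertex,
      (∀ n : ℤ, HypFilling.height (v n) = n) ∧
      (∀ n : ℤ, HypFilling.Adj τ (v n) (v (n + 1))) ∧
      (∀ n : ℤ, dist z ((HypFilling.pt (v n) : Z) : Completion Z) < (τ / 3) * a ^ n)) ∧
    (∀ (m : ℤ) (z₀ : Z) (hz : z₀ ∈ F.S m), ∃ v : ℤ → F.Vertex,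
      (∀ n : ℤ, HypFilling.height (v n) = n) ∧
      (∀ n : ℤ, HypFilling.Adj τ (v n) (v (n + 1))) ∧
      (∀ n : ℤ, dist ((z₀ : Z) : Completion Z) ((HypFilling.pt (v n) : Z) : Completion Z) <
        (τ / 3) * a ^ n) ∧
      v m = ⟨(z₀, m), hz⟩) :=
  statement18_general a τ ha0 hτ F
end

section
/- Fix hyperbolic filling data for a metric space Z with parameters a, τ, and let Z̄ denote the metric completion of Z with extended metric d̄. Let (u_j)_{j ∈ ℕ} be a descending sequence of vertices anchored at some z ∈ Z̄, i.e. h(u_{j+1}) = h(u_j) − 1, u_j ∼ u_{j+1}, and d̄(z, u_j) < (τ/3)·a^{h(u_j)} for all j. Then for every vertex w there exists N ∈ ℕ such that for all j ≥ N: h(w) − h(u_j) ≤ |u_j w| ≤ h(w) − h(u_j) + 1, where |u_j w| is the graph distance. (Consequently the Busemann function of the geodesic ray determined by (u_j) agrees with h + h(u₀) up to an additive error of 1 on vertices.) -/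
open Filter

/-! Once `h(u j) < h w`, the point `pt w` lies in the ball of `u j`: its distance to `z` is fixed
while the radius `τ a^{h(u j)}` grows without bound, and `d̄(z, u j)` takes only a third of it.
Then `u j`, vertices of heights `h(u j) + 1, …, h w - 1` chosen within `a^n` of `pt w`, and `w`
form a walk all of whose balls contain `pt w`, so `|u j w| ≤ h w - h(u j)`; conversely every edge
changes the height by at most one. Hence `|u j w| = h w - h(u j)` for all large `j`. -/

lemma eventually_dist_lt_of_dist_lt_mul {X ι : Type*} [PseudoMetricSpace X] {l : Filter ι}
    {r : ι → ℝ} {c : ℝ} (hr : Tendsto r l atTop) (hc : c < 1) {z : X} {x : ι → X}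
    (hx : ∀ i, dist z (x i) < c * r i) (p : X) : ∀ᶠ i in l, dist p (x i) < r i := by
  filter_upwards [hr.eventually_gt_atTop (dist p z / (1 - c))] with i hi
  have hpz : dist p z < (1 - c) * r i := by rwa [div_lt_iff₀' (by linarith)] at hi
  calc dist p (x i) ≤ dist p z + dist z (x i) := dist_triangle _ _ _
    _ < r i := by linarith [hx i]

lemma tendsto_zpow_sub_natCast_atTop {a : ℝ} (ha0 : 0 < a) (ha1 : a < 1) (n : ℤ) :
    Tendsto (fun j : ℕ => a ^ (n - j)) atTop atTop := by
  have hpow : ∀ j : ℕ, a ^ (n - j) = a ^ n * a⁻¹ ^ j := fun j => by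
    rw [zpow_sub₀ ha0.ne', zpow_natCast, div_eq_mul_inv, inv_pow]
  simp_rw [hpow]
  exact (tendsto_pow_atTop_atTop_of_one_lt (one_lt_inv₀ ha0 |>.mpr ha1)).const_mul_atTop
    (zpow_pos ha0 n)

namespace HypFilling

variable {Z : Type*} [MetricSpace Z] {a τ : ℝ} {F : HypFilling Z a}

noncomputable def nearVertex (F : HypFilling Z a) (p : Z) (n : ℤ) : F.Vertex :=
  ⟨((F.maximal n p).choose, n), (F.maximal n p).choose_spec.1⟩

lemma height_nearVertex (p : Z) (n : ℤ) : height (F.nearVertex p n) = n := rfl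

lemma dist_pt_nearVertex_lt (p : Z) (n : ℤ) : dist p (pt (F.nearVertex p n)) < a ^ n :=
  (F.maximal n p).choose_spec.2

lemma adj_of_height_eq_add_one {v w : F.Vertex} {p : Z} (hvw : height w = height v + 1)
    (hv : dist p (pt v) < τ * a ^ height v) (hw : dist p (pt w) < τ * a ^ height w) :
    Adj τ v w :=
  ⟨fun h => by rw [h] at hvw; omega, by rw [hvw]; simp, p, hv, hw⟩

lemma isWalk_of_height_eq_of_dist_lt {k : ℕ} {f : ℕ → F.Vertex} {p : Z} {n : ℤ}
    (hh : ∀ i ≤ k, height (f i) = n + i)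
    (hd : ∀ i ≤ k, dist p (pt (f i)) < τ * a ^ height (f i)) : IsWalk τ k f :=
  fun i hi => adj_of_height_eq_add_one (by rw [hh i hi.le, hh (i + 1) hi]; push_cast; ring)
    (hd i hi.le) (hd (i + 1) hi)

lemma abs_height_sub_le_of_isWalk {k : ℕ} {f : ℕ → F.Vertex} (hf : IsWalk τ k f) :
    |height (f k) - height (f 0)| ≤ k := by
  induction k with
  | zero => simp
  | succ k ih =>
    have hstep := (hf k k.lt_succ_self).2.1
    have hprev := ih fun i hi => hf i (hi.trans k.lt_succ_self)
    calc |height (f (k + 1)) - height (f 0)|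
        ≤ |height (f k) - height (f (k + 1))| + |height (f k) - height (f 0)| := by
          rw [abs_sub_comm (height (f k))]; exact abs_sub_le _ _ _
      _ ≤ ((k + 1 : ℕ) : ℤ) := by push_cast; omega

lemma graphDist_le_of_isWalk {v w : F.Vertex} {k : ℕ} {f : ℕ → F.Vertex} (h0 : f 0 = v)
    (hk : f k = w) (hf : IsWalk τ k f) : graphDist τ v w ≤ k :=
  Nat.sInf_le ⟨f, h0, hk, hf⟩

lemma Joined.abs_height_sub_le_graphDist {v w : F.Vertex} (h : Joined τ v w) :
    |height w - height v| ≤ graphDist τ v w := by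
  obtain ⟨f, h0, hk, hf⟩ := Nat.sInf_mem h
  have hwalk := abs_height_sub_le_of_isWalk hf
  rwa [h0, hk] at hwalk

theorem graphDist_eq_height_sub_of_dist_lt (ha : 0 < a) (hτ : 1 ≤ τ) {v w : F.Vertex}
    (hlt : height v < height w) (hd : dist (pt w) (pt v) < τ * a ^ height v) :
    (graphDist τ v w : ℤ) = height w - height v := by
  set L := (height w - height v).toNat with hL
  have hL0 : L ≠ 0 := by omega
  let f : ℕ → F.Vertex := fun i =>
    if i = 0 then v else if i = L then w else F.nearVertex (pt w) (height v + i)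
  have hf0 : f 0 = v := if_pos rfl
  have hfL : f L = w := by simp only [f, if_neg hL0, if_true]
  have hh : ∀ i ≤ L, height (f i) = height v + i := by
    intro i hi
    by_cases h0 : i = 0
    · simp [f, h0]
    by_cases hiL : i = L
    · subst hiL; rw [hfL]; omega
    · simp only [f, if_neg h0, if_neg hiL, height_nearVertex]
  have hnear : ∀ i ≤ L, dist (pt w) (pt (f i)) < τ * a ^ height (f i) := by
    intro i hi
    by_cases h0 : i = 0
    · simpa only [h0, hf0] using hd
    by_cases hiL : i = L
    · rw [hiL, hfL, dist_self]; exact mul_pos (by linarith) (zpow_pos ha _)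
    · simp only [f, if_neg h0, if_neg hiL, height_nearVertex]
      exact (dist_pt_nearVertex_lt _ _).trans_le
        (le_mul_of_one_le_left (zpow_pos ha _).le hτ)
  have hwalk : IsWalk τ L f := isWalk_of_height_eq_of_dist_lt hh hnear
  have hupper := graphDist_le_of_isWalk hf0 hfL hwalk
  have hlower := Joined.abs_height_sub_le_graphDist ⟨L, f, hf0, hfL, hwalk⟩
  have := le_abs_self (height w - height v)
  omega

end HypFilling

open UniformSpace in
theorem statement19_general {Z : Type*} [MetricSpace Z] (a τ : ℝ)
    (ha0 : 0 < a) (ha1 : a < 1) (hτ : max 3 (1 / (1 - a)) < τ)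
    (F : HypFilling Z a) (z : Completion Z) (u : ℕ → F.Vertex)
    (hdesc : ∀ j : ℕ, HypFilling.height (u (j + 1)) = HypFilling.height (u j) - 1)
    (hanch : ∀ j : ℕ,
      dist z ((HypFilling.pt (u j) : Z) : Completion Z) <
        (τ / 3) * a ^ HypFilling.height (u j)) :
    ∀ w : F.Vertex, ∃ N : ℕ, ∀ j ≥ N,
      HypFilling.height w - HypFilling.height (u j) ≤
          (HypFilling.graphDist τ (u j) w : ℤ) ∧
      (HypFilling.graphDist τ (u j) w : ℤ) ≤
          HypFilling.height w - HypFilling.height (u j) + 1 := by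
  open HypFilling in
  intro w
  have hτ3 : 3 < τ := (le_max_left _ _).trans_lt hτ
  have hheight : ∀ j : ℕ, height (u j) = height (u 0) - j := by
    intro j
    induction j with
    | zero => rw [Nat.cast_zero, sub_zero]
    | succ j ih => rw [hdesc j, ih]; push_cast; ring
  have hradius : Tendsto (fun j => τ * a ^ height (u j)) atTop atTop := by
    refine ((tendsto_zpow_sub_natCast_atTop ha0 ha1 (height (u 0))).const_mul_atTop
      (by linarith)).congr fun j => ?_
    rw [hheight j]
  have hclose : ∀ᶠ j in atTop, dist (pt w) (pt (u j)) < τ * a ^ height (u j) := by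
    filter_upwards [eventually_dist_lt_of_dist_lt_mul hradius (c := 1 / 3) (by norm_num)
      (fun j => (hanch j).trans_eq (by ring)) ((pt w : Z) : Completion Z)] with j hj
    rwa [Completion.dist_eq] at hj
  have hbelow : ∀ᶠ j in atTop, height (u j) < height w :=
    (tendsto_natCast_atTop_atTop.eventually_gt_atTop (height (u 0) - height w)).mono
      fun j hj => by rw [hheight]; omega
  obtain ⟨N, hN⟩ := (hclose.and hbelow).exists_forall_of_atTop
  refine ⟨N, fun j hj => ?_⟩
  have := graphDist_eq_height_sub_of_dist_lt ha0 (by linarith) (hN j hj).2 (hN j hj).1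
  omega

open UniformSpace in
/-- Theorem: for an anchored descending sequence of vertices `(u j)`, the graph
distance to any fixed vertex `w` is eventually the height difference, up to `1`. -/
theorem statement19 {Z : Type*} [MetricSpace Z] (a τ : ℝ)
    (ha0 : 0 < a) (ha1 : a < 1) (hτ : max 3 (1 / (1 - a)) < τ)
    (F : HypFilling Z a) (z : Completion Z) (u : ℕ → F.Vertex)
    (hdesc : ∀ j : ℕ, HypFilling.height (u (j + 1)) = HypFilling.height (u j) - 1)
    (hadj : ∀ j : ℕ, HypFilling.Adj τ (u j) (u (j + 1)))
    (hanch : ∀ j : ℕ,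
      dist z ((HypFilling.pt (u j) : Z) : Completion Z) <
        (τ / 3) * a ^ HypFilling.height (u j)) :
    ∀ w : F.Vertex, ∃ N : ℕ, ∀ j ≥ N,
      HypFilling.height w - HypFilling.height (u j) ≤
          (HypFilling.graphDist τ (u j) w : ℤ) ∧
      (HypFilling.graphDist τ (u j) w : ℤ) ≤
          HypFilling.height w - HypFilling.height (u j) + 1 :=
  statement19_general a τ ha0 ha1 hτ F z u hdesc hanch
end
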